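/- For every D ∈ ℕ, the set 𝒞_D := { (M, μ) ∈ 𝒞 : DM is entrywise integer, M e_i = M e_D for all i ≥ D, and the sum of absolute values of entries of μ is at most D } is a sub-minion of 𝒞 (i.e., closed under all minor operations), each arity part 𝒞_D^(L) is finite, and 𝒞 = ⋃_{D ∈ ℕ} 𝒞_D. -/
import Mathlib


/-- The 0-1 matrix associated with a map `π : [L] → [L']`. -/
def Pmat (α : Type*) [Zero α] [One α] {L L' : ℕ} (π : Fin L → Fin L') :
    Matrix (Fin L') (Fin L) α :=
  Matrix.of fun i j => if π j = i then 1 else 0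

/-- A `p × ℕ` rational matrix is skeletal if each row is zero or some column is the
corresponding standard unit vector. -/
def Skeletal {p : ℕ} (M : Matrix (Fin p) ℕ ℚ) : Prop :=
  ∀ j : Fin p, (∀ i : ℕ, M j i = 0) ∨
    (∃ i : ℕ, ∀ r : Fin p, M r i = if r = j then 1 else 0)

/-- Membership in the `L`-ary part of the CLAP minion `𝒞`. -/
def MemC {L : ℕ} (M : Matrix (Fin L) ℕ ℚ) (μ : Fin L → ℤ) : Prop :=
  (∀ i j, 0 ≤ M i j) ∧
  (∀ j : ℕ, ∑ i, M i j = 1) ∧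
  (∑ i, μ i = 1) ∧
  (∀ i, μ i ≠ 0 → M i 0 ≠ 0) ∧
  (∃ t : ℕ, ∀ i, t ≤ i → ∀ r, M r i = M r t) ∧
  Skeletal M

/-- Membership in the sub-minion `𝒞_D`. -/
def MemCD (D : ℕ) {L : ℕ} (M : Matrix (Fin L) ℕ ℚ) (μ : Fin L → ℤ) : Prop :=
  MemC M μ ∧
  (∀ i j, ∃ z : ℤ, (D : ℚ) * M i j = (z : ℚ)) ∧
  (∀ i, D ≤ i → ∀ r, M r i = M r D) ∧
  ((∑ i, |μ i|) ≤ (D : ℤ))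

lemma Pmat_mul_apply {L L' : ℕ} (π : Fin L → Fin L') (M : Matrix (Fin L) ℕ ℚ)
    (r : Fin L') (j : ℕ) :
    (Pmat ℚ π * M) r j = ∑ i ∈ Finset.univ.filter (fun i => π i = r), M i j := by
  simp [Pmat, Matrix.mul_apply, ite_mul, Finset.sum_filter]

lemma Pmat_mulVec_apply {L L' : ℕ} (π : Fin L → Fin L') (μ : Fin L → ℤ) (r : Fin L') :
    (Pmat ℤ π).mulVec μ r = ∑ i ∈ Finset.univ.filter (fun i => π i = r), μ i := by
  simp [Pmat, Matrix.mulVec, dotProduct, ite_mul, Finset.sum_filter]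

lemma part1 (D : ℕ) (L L' : ℕ) (M : Matrix (Fin L) ℕ ℚ) (μ : Fin L → ℤ) (π : Fin L → Fin L')
    (h : MemCD D M μ) : MemCD D (Pmat ℚ π * M) ((Pmat ℤ π).mulVec μ) := by
  obtain ⟨⟨hpos, hcol, hμsum, hsupp, ⟨t, ht⟩, hsk⟩, hint, hconst, habs⟩ := h
  refine ⟨⟨?_, ?_, ?_, ?_, ?_, ?_⟩, ?_, ?_, ?_⟩
  · intro i j
    rw [Pmat_mul_apply]
    exact Finset.sum_nonneg fun k _ => hpos k j
  · intro j
    simp_rw [Pmat_mul_apply]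
    rw [Finset.sum_fiberwise]
    exact hcol j
  · simp_rw [Pmat_mulVec_apply]
    rw [Finset.sum_fiberwise]
    exact hμsum
  · intro r hr
    rw [Pmat_mulVec_apply] at hr
    obtain ⟨i, hi, hne⟩ := Finset.exists_ne_zero_of_sum_ne_zero hr
    rw [Pmat_mul_apply]
    have h1 : 0 < M i 0 := lt_of_le_of_ne (hpos i 0) (Ne.symm (hsupp i hne))
    have : 0 < ∑ k ∈ Finset.univ.filter (fun k => π k = r), M k 0 :=
      Finset.sum_pos' (fun k _ => hpos k 0) ⟨i, hi, h1⟩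
    exact ne_of_gt this
  · refine ⟨t, fun i hi r => ?_⟩
    rw [Pmat_mul_apply, Pmat_mul_apply]
    exact Finset.sum_congr rfl fun k _ => ht i hi k
  · intro r
    by_cases h : ∀ i, π i = r → ∀ j, M i j = 0
    · left
      intro j
      rw [Pmat_mul_apply]
      exact Finset.sum_eq_zero fun k hk => h k (Finset.mem_filter.mp hk).2 j
    · right
      push_neg at h
      obtain ⟨i, hir, j, hj⟩ := h
      rcases hsk i with hz | ⟨c, hc⟩
      · exact absurd (hz j) hj
      refine ⟨c, fun r' => ?_⟩
      rw [Pmat_mul_apply]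
      have : ∀ k ∈ Finset.univ.filter (fun k => π k = r'),
          M k c = if k = i then 1 else 0 := fun k _ => hc k
      rw [Finset.sum_congr rfl this, Finset.sum_ite_eq' _ i]
      simp only [Finset.mem_filter, Finset.mem_univ, true_and, hir]
      by_cases hr' : r' = r <;> simp [hr']
      · intro hrr; exact hr' hrr.symm
  · intro i j
    rw [Pmat_mul_apply, Finset.mul_sum]
    have : ∀ k, ∃ z : ℤ, (D : ℚ) * M k j = (z : ℚ) := fun k => hint k j
    choose z hz using this
    refine ⟨∑ k ∈ Finset.univ.filter (fun k => π k = i), z k, ?_⟩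
    rw [Finset.sum_congr rfl fun k _ => hz k]
    push_cast
    ring
  · intro i hi r
    rw [Pmat_mul_apply, Pmat_mul_apply]
    exact Finset.sum_congr rfl fun k _ => hconst i hi k
  · calc ∑ r, |(Pmat ℤ π).mulVec μ r|
        ≤ ∑ r, ∑ i ∈ Finset.univ.filter (fun i => π i = r), |μ i| := by
          refine Finset.sum_le_sum fun r _ => ?_
          rw [Pmat_mulVec_apply]
          exact Finset.abs_sum_le_sum_abs _ _
      _ = ∑ i, |μ i| := Finset.sum_fiberwise _ _ _
      _ ≤ (D : ℤ) := habs

lemma entry_le_one {L : ℕ} {M : Matrix (Fin L) ℕ ℚ}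
    (hpos : ∀ i j, 0 ≤ M i j) (hcol : ∀ j : ℕ, ∑ i, M i j = 1) (i : Fin L) (j : ℕ) :
    M i j ≤ 1 := by
  rw [← hcol j]
  exact Finset.single_le_sum (fun k _ => hpos k j) (Finset.mem_univ i)

lemma part2 (D : ℕ) (hD : 0 < D) (L : ℕ) :
    Set.Finite {p : Matrix (Fin L) ℕ ℚ × (Fin L → ℤ) | MemCD D p.1 p.2} := by
  set s := {p : Matrix (Fin L) ℕ ℚ × (Fin L → ℤ) | MemCD D p.1 p.2}
  set f : (Matrix (Fin L) ℕ ℚ × (Fin L → ℤ)) → ((Fin L → Fin (D+1) → ℚ) × (Fin L → ℤ)) :=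
    fun p => (fun i j => p.1 i (j : ℕ), p.2)
  have hDQ : (D : ℚ) ≠ 0 := Nat.cast_ne_zero.mpr hD.ne'
  have hV : (Set.Finite ((fun z : ℤ => (z : ℚ) / D) '' Set.Icc 0 (D : ℤ))) :=
    (Set.finite_Icc _ _).image _
  have hW : (Set.Icc (-(D : ℤ)) (D : ℤ)).Finite := Set.finite_Icc _ _
  have himg : f '' s ⊆
      (Set.pi Set.univ fun _ : Fin L => Set.pi Set.univ fun _ : Fin (D+1) =>
        ((fun z : ℤ => (z : ℚ) / D) '' Set.Icc 0 (D : ℤ))) ×ˢ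
      (Set.pi Set.univ fun _ : Fin L => Set.Icc (-(D : ℤ)) (D : ℤ)) := by
    rintro _ ⟨⟨M, μ⟩, hp, rfl⟩
    obtain ⟨⟨hpos, hcol, hμsum, hsupp, hev, hsk⟩, hint, hconst, habs⟩ := hp
    constructor
    · intro i _ j _
      obtain ⟨z, hz⟩ := hint i (j : ℕ)
      refine ⟨z, ⟨?_, ?_⟩, ?_⟩
      · have : (0 : ℚ) ≤ (z : ℚ) := hz ▸ mul_nonneg (Nat.cast_nonneg D) (hpos i j)
        exact_mod_cast this
      · have : (z : ℚ) ≤ (D : ℚ) := by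
          rw [← hz]
          calc (D : ℚ) * M i (j : ℕ) ≤ (D : ℚ) * 1 :=
            mul_le_mul_of_nonneg_left (entry_le_one hpos hcol i j) (Nat.cast_nonneg D)
          _ = D := mul_one _
        exact_mod_cast this
      · rw [div_eq_iff hDQ, ← hz, mul_comm]
    · intro i _
      have h1 : |μ i| ≤ (D : ℤ) := le_trans
        (Finset.single_le_sum (fun k _ => abs_nonneg (μ k)) (Finset.mem_univ i)) habs
      exact Set.mem_Icc.mpr (abs_le.mp h1)
  have hinj : Set.InjOn f s := by
    rintro ⟨M, μ⟩ hp ⟨M', μ'⟩ hq h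
    have hμ : μ = μ' := congrArg Prod.snd h
    have hM : ∀ i (j : Fin (D+1)), M i (j : ℕ) = M' i (j : ℕ) := by
      intro i j
      exact congrFun (congrFun (congrArg Prod.fst h) i) j
    have hMD : ∀ i j, M i j = M' i j := by
      intro i j
      rcases le_or_gt j D with hj | hj
      · exact hM i ⟨j, Nat.lt_succ_of_le hj⟩
      · have h1 : M i j = M i D := hp.2.2.1 j hj.le i
        have h2 : M' i j = M' i D := hq.2.2.1 j hj.le i
        rw [h1, h2]
        exact hM i ⟨D, Nat.lt_succ_self D⟩
    have : M = M' := by ext i j; exact hMD i j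
    rw [Prod.ext_iff]; exact ⟨this, hμ⟩
  exact Set.Finite.of_finite_image
    (Set.Finite.subset (Set.Finite.prod
      (Set.Finite.pi fun _ => Set.Finite.pi fun _ => hV)
      (Set.Finite.pi fun _ => hW)) himg) hinj

lemma int_mul_of_den_dvd (q : ℚ) (n : ℕ) (h : q.den ∣ n) : ∃ z : ℤ, (n : ℚ) * q = z := by
  obtain ⟨k, rfl⟩ := h
  refine ⟨q.num * k, ?_⟩
  have hden : (q.den : ℚ) * q = q.num := by
    have h0 : (q.den : ℚ) ≠ 0 := Nat.cast_ne_zero.mpr q.den_nz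
    rw [mul_comm, eq_comm, ← div_eq_iff h0, Rat.num_div_den]
  push_cast
  linear_combination (k : ℚ) * hden

lemma part3 (L : ℕ) (M : Matrix (Fin L) ℕ ℚ) (μ : Fin L → ℤ) (h : MemC M μ) :
    ∃ D' : ℕ, 0 < D' ∧ MemCD D' M μ := by
  obtain ⟨hpos, hcol, hμsum, hsupp, ⟨t, ht⟩, hsk⟩ := h
  set N : ℕ := ∏ p ∈ Finset.univ ×ˢ Finset.range (t + 1), (M p.1 p.2).den with hN
  have hNpos : 0 < N := Finset.prod_pos fun p _ => (M p.1 p.2).pos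
  set S : ℕ := (∑ i, |μ i|).toNat with hS
  set D' : ℕ := (t + 1) * N * (S + 1) with hD'
  have hD'pos : 0 < D' := by positivity
  have htD' : t ≤ D' := by
    calc t ≤ t + 1 := Nat.le_succ t
    _ ≤ (t + 1) * (N * (S + 1)) := Nat.le_mul_of_pos_right _ (by positivity)
    _ = D' := by ring
  have hdvd : ∀ (i : Fin L) (j : ℕ), j ≤ t → (M i j).den ∣ D' := by
    intro i j hj
    have h1 : (M i j).den ∣ N :=
      Finset.dvd_prod_of_mem (fun p : Fin L × ℕ => (M p.1 p.2).den)
        (show ((i, j) : Fin L × ℕ) ∈ Finset.univ ×ˢ Finset.range (t + 1) from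
          Finset.mem_product.mpr
            ⟨Finset.mem_univ i, Finset.mem_range.mpr (Nat.lt_succ_of_le hj)⟩)
    exact h1.trans ⟨(t + 1) * (S + 1), by ring⟩
  refine ⟨D', hD'pos, ⟨hpos, hcol, hμsum, hsupp, ⟨t, ht⟩, hsk⟩, ?_, ?_, ?_⟩
  · intro i j
    rcases le_or_gt j t with hj | hj
    · exact int_mul_of_den_dvd _ _ (hdvd i j hj)
    · rw [ht j hj.le i]
      exact int_mul_of_den_dvd _ _ (hdvd i t le_rfl)
  · intro i hi r
    rw [ht i (htD'.trans hi) r, ht D' htD' r]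
  · calc ∑ i, |μ i| ≤ (S : ℤ) := Int.self_le_toNat _
    _ ≤ (D' : ℤ) := by
      have : S ≤ D' := by
        calc S ≤ S + 1 := Nat.le_succ S
        _ ≤ ((t + 1) * N) * (S + 1) := Nat.le_mul_of_pos_left _ (by positivity)
      exact_mod_cast this

/-- `𝒞_D` is a sub-minion of `𝒞`, each arity part of it is finite,
and `𝒞` is the union of the `𝒞_D`. -/
theorem stmt6 (D : ℕ) (hD : 0 < D) :
    (∀ (L L' : ℕ) (M : Matrix (Fin L) ℕ ℚ) (μ : Fin L → ℤ) (π : Fin L → Fin L'),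
      MemCD D M μ → MemCD D (Pmat ℚ π * M) ((Pmat ℤ π).mulVec μ)) ∧
    (∀ L : ℕ,
      Set.Finite {p : Matrix (Fin L) ℕ ℚ × (Fin L → ℤ) | MemCD D p.1 p.2}) ∧
    (∀ (L : ℕ) (M : Matrix (Fin L) ℕ ℚ) (μ : Fin L → ℤ),
      MemC M μ → ∃ D' : ℕ, 0 < D' ∧ MemCD D' M μ) := by
  exact ⟨fun L L' M μ π h => part1 D L L' M μ π h,
         fun L => part2 D hD L,
         fun L M μ h => part3 L M μ h⟩
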